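/- arXiv:1405.3819 — 12 statements merged into one kernel-verified Lean document; each statement's English description precedes it below -/
import Mathlib

section
/- Let M be a module over a ring R with a direct sum decomposition M = D ⊕ D', and let A and B be submodules of D. Then A β* B as submodules of M if and only if A β* B as submodules of D. -/
/-- A submodule `K` is small (superfluous) in `M`:
`K + N = M` implies `N = M` for all submodules `N`. -/
def IsSmallSub {R M : Type*} [Ring R] [AddCommGroup M] [Module R M]
    (K : Submodule R M) : Prop :=
  ∀ N : Submodule R M, K ⊔ N = ⊤ → N = ⊤

/-- `K` is small in the submodule `N` (where `K ≤ N`):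
for every submodule `L ≤ N`, `K + L = N` implies `L = N`. -/
def IsSmallIn {R M : Type*} [Ring R] [AddCommGroup M] [Module R M]
    (K N : Submodule R M) : Prop :=
  ∀ L : Submodule R M, L ≤ N → K ⊔ L = N → L = N

/-- The β* relation: `X β* Y` iff `(X+Y)/X ≪ M/X` and `(X+Y)/Y ≪ M/Y`. -/
def BetaStar {R M : Type*} [Ring R] [AddCommGroup M] [Module R M]
    (X Y : Submodule R M) : Prop :=
  IsSmallSub ((X ⊔ Y).map X.mkQ) ∧ IsSmallSub ((X ⊔ Y).map Y.mkQ)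

/-- A submodule is cyclic if it is generated by a single element. -/
def IsCyclicSub {R M : Type*} [Ring R] [AddCommGroup M] [Module R M]
    (X : Submodule R M) : Prop :=
  ∃ m : M, X = Submodule.span R {m}

/-- A submodule is a direct summand if it has a complement. -/
def IsDirectSummand {R M : Type*} [Ring R] [AddCommGroup M] [Module R M]
    (D : Submodule R M) : Prop :=
  ∃ D' : Submodule R M, IsCompl D D'

/-- `M` is principally Goldie*-lifting: every cyclic submodule is β* equivalent
to a direct summand. -/
def PrinGStarLifting (R M : Type*) [Ring R] [AddCommGroup M] [Module R M] : Prop :=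
  ∀ X : Submodule R M, IsCyclicSub X → ∃ D : Submodule R M, IsDirectSummand D ∧ BetaStar X D

/-- The radical of `M`: the intersection of all maximal proper submodules
(equal to `M` if there are none). -/
def RadSub (R M : Type*) [Ring R] [AddCommGroup M] [Module R M] : Submodule R M :=
  sInf {N : Submodule R M | IsCoatom N}

/-!
For `A ≤ D`, the map `D ⧸ A → M ⧸ A` is injective with image `D.map A.mkQ`, a direct
summand of `M ⧸ A` with complement `D'.map A.mkQ`. By the modular law, a submodule of a
direct summand is small in the summand iff it is small in the whole module. Applied to
`(A ⊔ B)/A` and `(A ⊔ B)/B`, this gives both halves of `β*`.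
-/

section

variable {R M N : Type*} [Ring R] [AddCommGroup M] [Module R M] [AddCommGroup N] [Module R N]

theorem isSmallSub_map_iff_of_isCompl_range {f : N →ₗ[R] M} (hf : Function.Injective f)
    {C : Submodule R M} (hC : IsCompl (LinearMap.range f) C) (K : Submodule R N) :
    IsSmallSub (K.map f) ↔ IsSmallSub K := by
  constructor
  · intro hK L hKL
    have hLC : L.map f ⊔ C = ⊤ :=
      hK _ (by rw [← sup_assoc, ← Submodule.map_sup, hKL, Submodule.map_top, hC.sup_eq_top])
    have hL : L.map f = (⊤ : Submodule R N).map f :=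
      calc L.map f = (L.map f ⊔ C) ⊓ LinearMap.range f := by
            rw [sup_inf_assoc_of_le _ LinearMap.map_le_range, hC.symm.inf_eq_bot, sup_bot_eq]
        _ = (⊤ : Submodule R N).map f := by rw [hLC, top_inf_eq, Submodule.map_top]
    exact Submodule.map_injective_of_injective hf hL
  · intro hK L hKL
    have hL : K ⊔ L.comap f = ⊤ := by
      apply Submodule.map_injective_of_injective hf
      rw [Submodule.map_sup, Submodule.map_comap_eq, Submodule.map_top, inf_comm,
        ← sup_inf_assoc_of_le _ LinearMap.map_le_range, hKL, top_inf_eq]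
    have hrange : LinearMap.range f ≤ L := LinearMap.range_le_iff_comap.2 (hK _ hL)
    exact top_le_iff.1 (hKL ▸ sup_le (LinearMap.map_le_range.trans hrange) le_rfl)

theorem isCompl_map_mkQ_of_le {D D' : Submodule R M} (hDD' : IsCompl D D') {A : Submodule R M}
    (hA : A ≤ D) : IsCompl (D.map A.mkQ) (D'.map A.mkQ) := by
  refine IsCompl.of_eq ?_ ?_
  · apply Submodule.comap_injective_of_surjective A.mkQ_surjective
    rw [Submodule.comap_inf, Submodule.comap_map_mkQ, Submodule.comap_map_mkQ, sup_eq_right.2 hA,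
      inf_comm, sup_inf_assoc_of_le _ hA, hDD'.symm.inf_eq_bot, sup_bot_eq, Submodule.comap_bot,
      Submodule.ker_mkQ]
  · rw [← Submodule.map_sup, hDD'.sup_eq_top, Submodule.map_top, Submodule.range_mkQ]

theorem isSmallSub_map_mkQ_iff_of_isCompl {D D' : Submodule R M} (hDD' : IsCompl D D')
    {A : Submodule R M} (hA : A ≤ D) (S : Submodule R D) :
    IsSmallSub ((S.map D.subtype).map A.mkQ) ↔ IsSmallSub (S.map (A.comap D.subtype).mkQ) := by
  set g := (A.comap D.subtype).mapQ A D.subtype le_rfl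
  have hg : Function.Injective g := by
    rw [← LinearMap.ker_eq_bot]
    exact Submodule.ker_liftQ_eq_bot _ _ _ (by rw [LinearMap.ker_comp, Submodule.ker_mkQ])
  have hrange : LinearMap.range g = D.map A.mkQ := by
    rw [Submodule.range_mapQ, Submodule.range_subtype]
  have hmap : (S.map (A.comap D.subtype).mkQ).map g = (S.map D.subtype).map A.mkQ := by
    rw [← Submodule.map_comp, Submodule.mapQ_mkQ, Submodule.map_comp]
  rw [← hmap]
  exact isSmallSub_map_iff_of_isCompl_range hg (hrange ▸ isCompl_map_mkQ_of_le hDD' hA) _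

end

/-- If `M = D ⊕ D'` and `A, B ≤ D`, then `A β* B` in `M` iff
`A β* B` in `D`. -/
theorem stmt_0 {R M : Type*} [Ring R] [AddCommGroup M] [Module R M]
    (D D' : Submodule R M) (hDD' : IsCompl D D')
    (A B : Submodule R M) (hA : A ≤ D) (hB : B ≤ D) :
    BetaStar A B ↔ BetaStar (A.comap D.subtype) (B.comap D.subtype) := by
  have hsup : (A.comap D.subtype ⊔ B.comap D.subtype).map D.subtype = A ⊔ B := by
    rw [Submodule.map_sup, Submodule.map_comap_subtype, Submodule.map_comap_subtype,
      inf_eq_right.2 hA, inf_eq_right.2 hB]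
  unfold BetaStar
  rw [← isSmallSub_map_mkQ_iff_of_isCompl hDD' hA, ← isSmallSub_map_mkQ_iff_of_isCompl hDD' hB,
    hsup]
end

section
/- Let M be a module over a ring R, let D be a direct summand of M (i.e., M = D ⊕ D' for some submodule D'), and let X be a cyclic submodule of M. If D β* X in M, then D is a cyclic submodule. -/
theorem IsCyclicSub.map {R M N : Type*} [Ring R] [AddCommGroup M] [Module R M]
    [AddCommGroup N] [Module R N] {X : Submodule R M} (hX : IsCyclicSub X) (f : M →ₗ[R] N) :
    IsCyclicSub (X.map f) := by
  obtain ⟨m, rfl⟩ := hX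
  exact ⟨f m, by rw [Submodule.map_span, Set.image_singleton]⟩

namespace Submodule

variable {R M : Type*} [Ring R] [AddCommGroup M] [Module R M]

theorem sup_eq_top_of_isSmallSub_map_mkQ {X Y N : Submodule R M}
    (hsmall : IsSmallSub ((Y ⊔ X).map X.mkQ)) (hYN : Y ⊔ N = ⊤) : X ⊔ N = ⊤ := by
  have hcover : (Y ⊔ X).map X.mkQ ⊔ (X ⊔ N).map X.mkQ = ⊤ := by
    rw [← map_sup, map_mkQ_eq_top, eq_top_iff, ← hYN]
    exact le_sup_of_le_right (sup_le_sup le_sup_left le_sup_right)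
  have hXN := hsmall _ hcover
  rwa [map_mkQ_eq_top, ← sup_assoc, sup_idem] at hXN

theorem map_projection_eq_of_sup_eq_top {D D' X : Submodule R M} (hc : IsCompl D D')
    (hX : X ⊔ D' = ⊤) : X.map (D.projection D' hc) = D :=
  calc X.map (D.projection D' hc)
      = (X ⊔ D').map (D.projection D' hc) := by
        rw [map_sup, LinearMap.le_ker_iff_map.mp (ker_projection hc).ge, sup_bot_eq]
    _ = D := by rw [hX, map_top, range_projection]

end Submodule

/-- If a direct summand `D` of `M` is β* equivalent to a cyclic
submodule `X` of `M`, then `D` is cyclic. -/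
theorem stmt_1 {R M : Type*} [Ring R] [AddCommGroup M] [Module R M]
    (D X : Submodule R M) (hD : IsDirectSummand D) (hX : IsCyclicSub X)
    (h : BetaStar D X) :
    IsCyclicSub D := by
  obtain ⟨D', hc⟩ := hD
  have hXD' : X ⊔ D' = ⊤ := Submodule.sup_eq_top_of_isSmallSub_map_mkQ h.2 hc.sup_eq_top
  rw [← Submodule.map_projection_eq_of_sup_eq_top hc hXD']
  exact hX.map _
end

section
/- Every principally lifting module is principally Goldie*-lifting: if M is a module over a ring R such that for every cyclic submodule X of M there exists a decomposition M = D ⊕ D' with D ⊆ X and X ∩ D' small in M, then for every cyclic submodule X of M there exists a direct summand D of M with X β* D. -/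
/-! If `M = D ⊕ D'` with `D ≤ X`, the modular law gives `X = D ⊕ (X ∩ D')`, so `X / D` is the
image in `M / D` of `X ∩ D'`. Homomorphic images of small submodules are small, hence `X / D` is
small in `M / D`, while `(X + D) / X = 0`. -/

section Small

variable {R M N : Type*} [Ring R] [AddCommGroup M] [Module R M] [AddCommGroup N] [Module R N]

theorem isSmallSub_bot : IsSmallSub (⊥ : Submodule R M) := fun _ h => by
  rwa [bot_sup_eq] at h

theorem IsSmallSub.map {K : Submodule R M} (hK : IsSmallSub K) (f : M →ₗ[R] N) :
    IsSmallSub (K.map f) := by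
  intro L hL
  have hpre : K ⊔ L.comap f = ⊤ := by
    rw [eq_top_iff, ← Submodule.comap_map_sup_of_comap_le (f := f) (le_sup_right (a := K)),
      ← Submodule.comap_top f, ← hL]
    exact Submodule.comap_mono (sup_le_sup_right (Submodule.map_mono le_sup_left) L)
  have hKL : K.map f ≤ L := Submodule.map_le_iff_le_comap.mpr (hK _ hpre ▸ le_top)
  rwa [sup_eq_right.mpr hKL] at hL

end Small

section BetaStar

variable {R M : Type*} [Ring R] [AddCommGroup M] [Module R M]

theorem betaStar_of_le {X D : Submodule R M} (hDX : D ≤ X) (hX : IsSmallSub (X.map D.mkQ)) :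
    BetaStar X D := by
  rw [BetaStar, sup_eq_left.mpr hDX, Submodule.mkQ_map_self]
  exact ⟨isSmallSub_bot, hX⟩

theorem map_mkQ_eq_map_inf_of_isCompl {X D D' : Submodule R M} (hDD' : IsCompl D D')
    (hDX : D ≤ X) : X.map D.mkQ = (X ⊓ D').map D.mkQ := by
  conv_lhs => rw [← top_inf_eq X, ← hDD'.sup_eq_top, sup_inf_assoc_of_le D' hDX]
  rw [Submodule.map_sup, Submodule.mkQ_map_self, bot_sup_eq, inf_comm]

end BetaStar

/-- Every principally lifting module is principally
Goldie*-lifting. -/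
theorem stmt_3 {R M : Type*} [Ring R] [AddCommGroup M] [Module R M]
    (h : ∀ X : Submodule R M, IsCyclicSub X →
      ∃ D D' : Submodule R M, IsCompl D D' ∧ D ≤ X ∧ IsSmallSub (X ⊓ D')) :
    PrinGStarLifting R M := by
  intro X hX
  obtain ⟨D, D', hDD', hDX, hsmall⟩ := h X hX
  refine ⟨D, ⟨D', hDD'⟩, betaStar_of_le hDX ?_⟩
  rw [map_mkQ_eq_map_inf_of_isCompl hDD' hDX]
  exact hsmall.map D.mkQ
end

section
/- Every principally Goldie*-lifting module is principally supplemented: if M is a module over a ring R such that for every cyclic submodule X of M there exists a direct summand D of M with X β* D, then for every cyclic submodule X of M there exists a submodule N of M with M = N + X and N ∩ X small in N. -/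
/-!
If `X β* D` and `M = D ⊕ D'`, then `D'` is a supplement of `X`. Since `X + D + D' = M` and
`(X + D)/X ≪ M/X`, already `X + D' = M`. If `L ≤ D'` and `(D' ∩ X) + L = D'`, then
`X + D + L ⊇ D + D' = M`, so `(X + D)/D ≪ M/D` gives `D + L = M`, and the modular law
(`D ∩ D' = 0`) forces `L = D'`.
-/

section

variable {R M : Type*} [Ring R] [AddCommGroup M] [Module R M]

theorem sup_eq_top_of_isSmallSub_map_mkQ {X K N : Submodule R M}
    (hK : IsSmallSub (K.map X.mkQ)) (hKN : K ⊔ N = ⊤) : X ⊔ N = ⊤ := by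
  rw [← Submodule.map_mkQ_eq_top]
  exact hK _ (by rw [← Submodule.map_sup, hKN, Submodule.map_top, Submodule.range_mkQ])

theorem isSmallIn_inf_of_isCompl {X D D' : Submodule R M} (hDD' : IsCompl D D')
    (hX : IsSmallSub ((X ⊔ D).map D.mkQ)) : IsSmallIn (D' ⊓ X) D' := by
  intro L hL hsum
  have hXL : X ⊔ D ⊔ L = ⊤ := by
    have hD' : D' ≤ X ⊔ D ⊔ L :=
      hsum ▸ sup_le_sup_right (inf_le_right.trans le_sup_left) L
    rw [eq_top_iff, ← hDD'.codisjoint.eq_top]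
    exact sup_le (le_sup_right.trans le_sup_left) hD'
  have hDL : D ⊔ L = ⊤ := sup_eq_top_of_isSmallSub_map_mkQ hX hXL
  refine eq_of_le_of_inf_le_of_le_sup hL ?_ (by rw [sup_comm, hDL]; exact le_top)
  rw [hDD'.symm.disjoint.eq_bot]
  exact bot_le

theorem BetaStar.exists_supplement {X D : Submodule R M} (hXD : BetaStar X D)
    (hD : IsDirectSummand D) : ∃ N : Submodule R M, N ⊔ X = ⊤ ∧ IsSmallIn (N ⊓ X) N := by
  obtain ⟨D', hDD'⟩ := hD
  refine ⟨D', ?_, isSmallIn_inf_of_isCompl hDD' hXD.2⟩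
  rw [sup_comm]
  exact sup_eq_top_of_isSmallSub_map_mkQ hXD.1
    (by rw [sup_assoc, hDD'.codisjoint.eq_top, sup_top_eq])

end

/-- Every principally Goldie*-lifting module is principally
supplemented. -/
theorem stmt_4 {R M : Type*} [Ring R] [AddCommGroup M] [Module R M]
    (h : PrinGStarLifting R M) :
    ∀ X : Submodule R M, IsCyclicSub X →
      ∃ N : Submodule R M, N ⊔ X = ⊤ ∧ IsSmallIn (N ⊓ X) N := by
  intro X hX
  obtain ⟨D, hD, hXD⟩ := h X hX
  exact BetaStar.exists_supplement hXD hD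
end

section
/- Let M be a nonzero indecomposable module over a ring R (the only direct summands of M are 0 and M). Then the following are equivalent: (a) M is principally lifting; (b) M is principally hollow; (c) M is principally Goldie*-lifting. -/
/-!
In an indecomposable module the only direct summands are `0` and `M`, so each of the three
conditions reduces, for a single cyclic `X`, to the same dichotomy. A decomposition
`M = D ⊕ D'` with `D ≤ X` is either `D = M` (forcing `X = M`) or `D' = M` (asking `X ≪ M`).
Likewise `X β* M` forces `M/X ≪ M/X`, i.e. `X = M`, while `X β* 0` says exactly `X ≪ M`.
-/

section

variable {R M N : Type*} [Ring R] [AddCommGroup M] [Module R M] [AddCommGroup N] [Module R N]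

theorem IsSmallSub.map_linearEquiv {K : Submodule R M} (hK : IsSmallSub K) (e : M ≃ₗ[R] N) :
    IsSmallSub (K.map (e : M →ₗ[R] N)) := by
  intro L hL
  let φ := Submodule.orderIsoMapComap e
  have : K ⊔ φ.symm L = ⊤ := by
    rw [← φ.symm_apply_apply K, ← φ.symm.map_sup, ← φ.symm.map_top]
    exact congrArg φ.symm hL
  rw [← φ.apply_symm_apply L, hK _ this, φ.map_top]

theorem isSmallSub_map_linearEquiv_iff (K : Submodule R M) (e : M ≃ₗ[R] N) :
    IsSmallSub (K.map (e : M →ₗ[R] N)) ↔ IsSmallSub K := by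
  refine ⟨fun h => ?_, fun h => h.map_linearEquiv e⟩
  have h' := h.map_linearEquiv e.symm
  rwa [(Submodule.map_symm_eq_iff e).mpr rfl] at h'

theorem isSmallSub_map_mkQ_bot_iff (K : Submodule R M) :
    IsSmallSub (K.map (⊥ : Submodule R M).mkQ) ↔ IsSmallSub K :=
  isSmallSub_map_linearEquiv_iff K <| LinearEquiv.ofBijective _
    ⟨LinearMap.ker_eq_bot.mp (Submodule.ker_mkQ ⊥), Submodule.mkQ_surjective ⊥⟩

theorem subsingleton_of_isSmallSub_top (h : IsSmallSub (⊤ : Submodule R M)) : Subsingleton M :=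
  (Submodule.subsingleton_iff R).mp (subsingleton_of_bot_eq_top (h ⊥ (sup_bot_eq ⊤)))

theorem betaStar_refl (X : Submodule R M) : BetaStar X X := by
  simp only [BetaStar, sup_idem, Submodule.mkQ_map_self, and_self]
  exact isSmallSub_bot

theorem betaStar_bot_iff (X : Submodule R M) : BetaStar X ⊥ ↔ IsSmallSub X := by
  simp only [BetaStar, sup_bot_eq, Submodule.mkQ_map_self, isSmallSub_map_mkQ_bot_iff]
  exact and_iff_right isSmallSub_bot

theorem betaStar_top_iff (X : Submodule R M) : BetaStar X ⊤ ↔ X = ⊤ := by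
  refine ⟨fun h => ?_, fun h => by subst h; exact betaStar_refl ⊤⟩
  have hquot := h.1
  rw [sup_top_eq, Submodule.map_top, Submodule.range_mkQ] at hquot
  exact Submodule.Quotient.subsingleton_iff.mp (subsingleton_of_isSmallSub_top hquot)

theorem exists_isCompl_le_and_isSmallSub_inf_iff
    (hind : ∀ D : Submodule R M, IsDirectSummand D → D = ⊥ ∨ D = ⊤) (X : Submodule R M) :
    (∃ D D' : Submodule R M, IsCompl D D' ∧ D ≤ X ∧ IsSmallSub (X ⊓ D')) ↔
      (X ≠ ⊤ → IsSmallSub X) := by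
  constructor
  · rintro ⟨D, D', hDD', hDX, hsmall⟩ hXne
    rcases hind D ⟨D', hDD'⟩ with rfl | rfl
    · rwa [eq_top_of_bot_isCompl hDD', inf_top_eq] at hsmall
    · exact absurd (top_le_iff.mp hDX) hXne
  · intro h
    by_cases hX : X = ⊤
    · exact ⟨⊤, ⊥, isCompl_top_bot, hX.ge, by simpa using isSmallSub_bot⟩
    · exact ⟨⊥, ⊤, isCompl_bot_top, bot_le, by simpa using h hX⟩

theorem exists_isDirectSummand_betaStar_iff
    (hind : ∀ D : Submodule R M, IsDirectSummand D → D = ⊥ ∨ D = ⊤) (X : Submodule R M) :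
    (∃ D : Submodule R M, IsDirectSummand D ∧ BetaStar X D) ↔ (X ≠ ⊤ → IsSmallSub X) := by
  constructor
  · rintro ⟨D, hD, hXD⟩ hXne
    rcases hind D hD with rfl | rfl
    · exact (betaStar_bot_iff X).mp hXD
    · exact absurd ((betaStar_top_iff X).mp hXD) hXne
  · intro h
    by_cases hX : X = ⊤
    · exact ⟨⊤, ⟨⊥, isCompl_top_bot⟩, (betaStar_top_iff X).mpr hX⟩
    · exact ⟨⊥, ⟨⊤, isCompl_bot_top⟩, (betaStar_bot_iff X).mpr (h hX)⟩

end

theorem stmt_5_general {R M : Type*} [Ring R] [AddCommGroup M] [Module R M]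
    (hind : ∀ D : Submodule R M, IsDirectSummand D → D = ⊥ ∨ D = ⊤) :
    ((∀ X : Submodule R M, IsCyclicSub X →
        ∃ D D' : Submodule R M, IsCompl D D' ∧ D ≤ X ∧ IsSmallSub (X ⊓ D')) ↔
      (∀ X : Submodule R M, IsCyclicSub X → X ≠ ⊤ → IsSmallSub X)) ∧
    ((∀ X : Submodule R M, IsCyclicSub X → X ≠ ⊤ → IsSmallSub X) ↔
      PrinGStarLifting R M) :=
  ⟨forall₂_congr fun X _ => exists_isCompl_le_and_isSmallSub_inf_iff hind X,
    forall₂_congr fun X _ => (exists_isDirectSummand_betaStar_iff hind X).symm⟩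

/-- For a nonzero indecomposable module `M`, the following are
equivalent: (a) principally lifting, (b) principally hollow,
(c) principally Goldie*-lifting. -/
theorem stmt_5 {R M : Type*} [Ring R] [AddCommGroup M] [Module R M]
    [Nontrivial M]
    (hind : ∀ D : Submodule R M, IsDirectSummand D → D = ⊥ ∨ D = ⊤) :
    ((∀ X : Submodule R M, IsCyclicSub X →
        ∃ D D' : Submodule R M, IsCompl D D' ∧ D ≤ X ∧ IsSmallSub (X ⊓ D')) ↔
      (∀ X : Submodule R M, IsCyclicSub X → X ≠ ⊤ → IsSmallSub X)) ∧
    ((∀ X : Submodule R M, IsCyclicSub X → X ≠ ⊤ → IsSmallSub X) ↔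
      PrinGStarLifting R M) :=
  stmt_5_general hind
end

section
/- Let M = M₁ ⊕ M₂ be a duo module over a ring R (every submodule N of M satisfies f(N) ⊆ N for every R-linear endomorphism f of M). Then M is principally Goldie*-lifting if and only if both M₁ and M₂ are principally Goldie*-lifting. -/
/-!
In a duo module `M = M₁ ⊕ M₂` every submodule `N` splits as `(N ⊓ M₁) ⊔ (N ⊓ M₂)`, so
`N ↦ (N ⊓ M₁, N ⊓ M₂)` is a lattice isomorphism from the submodules of `M` onto pairs of
submodules of `M₁` and `M₂`. Being a direct summand and β* equivalence are lattice-theoretic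
(by the correspondence theorem, `(X + Y)/X ≪ M/X` is a statement about the interval `[X, M]`)
and both are computed componentwise in a product of lattices. Finally a submodule is cyclic iff
both of its components are: the projections, being endomorphisms of `M`, send a generator `m`
to generators of the components, and conversely `a + b` generates `Ra ⊕ Rb`.
-/

open Set

section SmallOver

variable {α β γ : Type*}

section OrderTop

variable [Lattice α] [OrderTop α] [Lattice β] [OrderTop β] [Lattice γ] [OrderTop γ]

/-- `IsSmallOver x y` says that `(x ⊔ y) / x` is small in `⊤ / x`, read in the interval
`[x, ⊤]`. -/
def IsSmallOver (x y : α) : Prop :=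
  ∀ n, x ≤ n → y ⊔ n = ⊤ → n = ⊤

def IsBetaStarEquiv (x y : α) : Prop :=
  IsSmallOver x y ∧ IsSmallOver y x

theorem isSmallOver_sup_right_iff {x y : α} : IsSmallOver x (x ⊔ y) ↔ IsSmallOver x y := by
  have hsup {n : α} (hn : x ≤ n) : x ⊔ y ⊔ n = y ⊔ n := by
    rw [sup_comm x y, sup_assoc, sup_eq_right.mpr hn]
  exact forall_congr' fun n => forall_congr' fun hn => by rw [hsup hn]

theorem OrderIso.isSmallOver_iff (e : α ≃o β) {x y : α} :
    IsSmallOver (e x) (e y) ↔ IsSmallOver x y := by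
  simp only [IsSmallOver, e.surjective.forall, e.le_iff_le, ← e.map_sup, map_eq_top_iff]

theorem OrderIso.isBetaStarEquiv_iff (e : α ≃o β) {x y : α} :
    IsBetaStarEquiv (e x) (e y) ↔ IsBetaStarEquiv x y :=
  and_congr e.isSmallOver_iff e.isSmallOver_iff

theorem Prod.isSmallOver_iff {x y : β × γ} :
    IsSmallOver x y ↔ IsSmallOver x.1 y.1 ∧ IsSmallOver x.2 y.2 := by
  refine ⟨fun h => ⟨fun n hxn hyn => ?_, fun n hxn hyn => ?_⟩, ?_⟩
  · exact congrArg Prod.fst (h (n, ⊤) ⟨hxn, le_top⟩ (Prod.ext hyn (sup_top_eq _)))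
  · exact congrArg Prod.snd (h (⊤, n) ⟨le_top, hxn⟩ (Prod.ext (sup_top_eq _) hyn))
  · rintro ⟨h₁, h₂⟩ n ⟨hxn₁, hxn₂⟩ hyn
    exact Prod.ext (h₁ n.1 hxn₁ (congrArg Prod.fst hyn)) (h₂ n.2 hxn₂ (congrArg Prod.snd hyn))

theorem Prod.isBetaStarEquiv_iff {x y : β × γ} :
    IsBetaStarEquiv x y ↔ IsBetaStarEquiv x.1 y.1 ∧ IsBetaStarEquiv x.2 y.2 := by
  simp only [IsBetaStarEquiv, Prod.isSmallOver_iff]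
  tauto

theorem Set.Ici.isSmallOver_iff {a : α} {x y : Ici a} :
    IsSmallOver x y ↔ IsSmallOver (x : α) y := by
  refine ⟨fun h n hxn hyn => ?_, fun h n hxn hyn => ?_⟩
  · exact congrArg Subtype.val (h ⟨n, x.2.trans hxn⟩ hxn (Subtype.ext hyn))
  · exact Subtype.ext (h n hxn (congrArg Subtype.val hyn))

end OrderTop

section BoundedOrder

variable [Lattice α] [BoundedOrder α] [Lattice β] [BoundedOrder β] [Lattice γ] [BoundedOrder γ]

theorem OrderIso.isComplemented_iff (e : α ≃o β) {x : α} :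
    IsComplemented (e x) ↔ IsComplemented x := by
  simp only [IsComplemented, e.surjective.exists, ← e.isCompl_iff]

theorem Prod.isComplemented_iff {x : β × γ} :
    IsComplemented x ↔ IsComplemented x.1 ∧ IsComplemented x.2 := by
  simp only [IsComplemented, Prod.exists, Prod.isCompl_iff, exists_and_left, exists_and_right]

def IsBetaStarLifting (C : α → Prop) : Prop :=
  ∀ x, C x → ∃ d, IsComplemented d ∧ IsBetaStarEquiv x d

theorem OrderIso.isBetaStarLifting_congr (e : α ≃o β) {C : α → Prop} {C' : β → Prop}
    (hC : ∀ x, C x ↔ C' (e x)) : IsBetaStarLifting C ↔ IsBetaStarLifting C' := by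
  simp only [IsBetaStarLifting, e.surjective.forall, e.surjective.exists, ← hC,
    e.isComplemented_iff, e.isBetaStarEquiv_iff]

theorem Prod.isBetaStarLifting_iff {C : β → Prop} {C' : γ → Prop} (hC : C ⊥) (hC' : C' ⊥) :
    IsBetaStarLifting (fun x : β × γ => C x.1 ∧ C' x.2) ↔
      IsBetaStarLifting C ∧ IsBetaStarLifting C' := by
  refine ⟨fun h => ⟨fun x hx => ?_, fun x hx => ?_⟩, ?_⟩
  · obtain ⟨d, hd, hxd⟩ := h (x, ⊥) ⟨hx, hC'⟩
    exact ⟨d.1, (Prod.isComplemented_iff.mp hd).1, (Prod.isBetaStarEquiv_iff.mp hxd).1⟩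
  · obtain ⟨d, hd, hxd⟩ := h (⊥, x) ⟨hC, hx⟩
    exact ⟨d.2, (Prod.isComplemented_iff.mp hd).2, (Prod.isBetaStarEquiv_iff.mp hxd).2⟩
  · rintro ⟨h, h'⟩ x ⟨hx, hx'⟩
    obtain ⟨d, hd, hxd⟩ := h x.1 hx
    obtain ⟨d', hd', hxd'⟩ := h' x.2 hx'
    exact ⟨(d, d'), Prod.isComplemented_iff.mpr ⟨hd, hd'⟩,
      Prod.isBetaStarEquiv_iff.mpr ⟨hxd, hxd'⟩⟩

end BoundedOrder

end SmallOver

section Decomposition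

variable {α : Type*} [Lattice α] [BoundedOrder α] [IsModularLattice α] {a b : α}

theorem IsCompl.sup_inf_left_of_le (hab : IsCompl a b) {x y : α} (hx : x ≤ a) (hy : y ≤ b) :
    (x ⊔ y) ⊓ a = x := by
  rw [sup_inf_assoc_of_le y hx, (hab.symm.disjoint.mono_left hy).eq_bot, sup_bot_eq]

def IsCompl.orderIsoIicProdIic (hab : IsCompl a b) (hsplit : ∀ x, x ⊓ a ⊔ x ⊓ b = x) :
    α ≃o Iic a × Iic b where
  toFun x := (⟨x ⊓ a, inf_le_right⟩, ⟨x ⊓ b, inf_le_right⟩)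
  invFun p := p.1 ⊔ p.2
  left_inv := hsplit
  right_inv p := Prod.ext (Subtype.ext (hab.sup_inf_left_of_le p.1.2 p.2.2))
    (Subtype.ext <| show ((p.1 : α) ⊔ p.2) ⊓ b = p.2 by
      rw [sup_comm]; exact hab.symm.sup_inf_left_of_le p.2.2 p.1.2)
  map_rel_iff' {x y} := by
    refine ⟨fun h => ?_, fun h => ⟨inf_le_inf_right a h, inf_le_inf_right b h⟩⟩
    rw [← hsplit x, ← hsplit y]
    exact sup_le_sup h.1 h.2

end Decomposition

section Submodule

open Submodule

variable {R M : Type*} [Ring R] [AddCommGroup M] [Module R M]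

theorem isSmallSub_map_mkQ_iff (X Y : Submodule R M) :
    IsSmallSub ((X ⊔ Y).map X.mkQ) ↔ IsSmallOver X Y := by
  have hbot : IsSmallSub ((X ⊔ Y).map X.mkQ) ↔ IsSmallOver ⊥ ((X ⊔ Y).map X.mkQ) :=
    forall_congr' fun N => ⟨fun h _ => h, fun h => h bot_le⟩
  rw [hbot, ← (comapMkQRelIso X).isSmallOver_iff, Set.Ici.isSmallOver_iff]
  simpa [comapMkQRelIso, comap_map_mkQ] using isSmallOver_sup_right_iff

theorem betaStar_iff_isBetaStarEquiv (X Y : Submodule R M) :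
    BetaStar X Y ↔ IsBetaStarEquiv X Y :=
  and_congr (isSmallSub_map_mkQ_iff X Y) (by rw [sup_comm]; exact isSmallSub_map_mkQ_iff Y X)

theorem prinGStarLifting_iff_isBetaStarLifting :
    PrinGStarLifting R M ↔ IsBetaStarLifting (IsCyclicSub (R := R) (M := M)) := by
  simp only [PrinGStarLifting, IsBetaStarLifting, betaStar_iff_isBetaStarEquiv]
  rfl

theorem isCyclicSub_bot : IsCyclicSub (⊥ : Submodule R M) :=
  ⟨0, (span_zero_singleton R).symm⟩

theorem isCyclicSub_map_subtype_iff (P : Submodule R M) (Y : Submodule R P) :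
    IsCyclicSub (Y.map P.subtype) ↔ IsCyclicSub Y := by
  constructor
  · rintro ⟨m, hm⟩
    have hmP : m ∈ P := map_subtype_le P Y (hm ▸ mem_span_singleton_self m)
    refine ⟨⟨m, hmP⟩, map_injective_of_injective P.injective_subtype ?_⟩
    rw [hm, map_subtype_span_singleton]
  · rintro ⟨m, rfl⟩
    exact ⟨m, map_subtype_span_singleton m⟩

theorem prinGStarLifting_iff_isBetaStarLifting_Iic (P : Submodule R M) :
    PrinGStarLifting R P ↔ IsBetaStarLifting fun X : Iic P => IsCyclicSub (X : Submodule R M) := by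
  rw [prinGStarLifting_iff_isBetaStarLifting, P.mapIic.isBetaStarLifting_congr]
  intro Y
  rw [coe_mapIic_apply, isCyclicSub_map_subtype_iff]

variable {p q N : Submodule R M}

theorem Submodule.IsFullyInvariant.inf_eq_map_projection (hN : N.IsFullyInvariant)
    (h : IsCompl p q) : N ⊓ p = N.map (p.projection q h) := by
  refine le_antisymm (fun x hx => ⟨x, hx.1, (projection_eq_self_iff h x).mpr hx.2⟩)
    (le_inf (map_le_iff_le_comap.mpr (hN _)) ?_)
  rintro _ ⟨x, -, rfl⟩
  exact projection_apply_mem h x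

theorem Submodule.IsFullyInvariant.inf_sup_inf (hN : N.IsFullyInvariant) (h : IsCompl p q) :
    N ⊓ p ⊔ N ⊓ q = N := by
  refine le_antisymm (sup_le inf_le_left inf_le_left) fun x hx => ?_
  rw [hN.inf_eq_map_projection h, hN.inf_eq_map_projection h.symm,
    ← projection_add_projection_eq_self h x]
  exact add_mem_sup (mem_map_of_mem hx) (mem_map_of_mem hx)

theorem span_singleton_inf_eq_span_projection {m : M} (hm : (span R {m}).IsFullyInvariant)
    (h : IsCompl p q) : span R {m} ⊓ p = span R {p.projection q h m} := by
  rw [hm.inf_eq_map_projection h, map_span, Set.image_singleton]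

theorem isCyclicSub_iff_inf (hduo : ∀ N : Submodule R M, N.IsFullyInvariant) (h : IsCompl p q)
    (X : Submodule R M) : IsCyclicSub X ↔ IsCyclicSub (X ⊓ p) ∧ IsCyclicSub (X ⊓ q) := by
  constructor
  · rintro ⟨m, rfl⟩
    exact ⟨⟨_, span_singleton_inf_eq_span_projection (hduo _) h⟩,
      ⟨_, span_singleton_inf_eq_span_projection (hduo _) h.symm⟩⟩
  · rintro ⟨⟨a, ha⟩, ⟨b, hb⟩⟩
    have hap : a ∈ p := (ha ▸ inf_le_right : span R {a} ≤ p) (mem_span_singleton_self a)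
    have hbq : b ∈ q := (hb ▸ inf_le_right : span R {b} ≤ q) (mem_span_singleton_self b)
    refine ⟨a + b, ?_⟩
    rw [← (hduo X).inf_sup_inf h, ← (hduo (span R {a + b})).inf_sup_inf h,
      span_singleton_inf_eq_span_projection (hduo _) h,
      span_singleton_inf_eq_span_projection (hduo _) h.symm, ha, hb, map_add, map_add,
      projection_apply_of_mem_left h hap, projection_apply_of_mem_right h hbq,
      projection_apply_of_mem_left h.symm hbq, projection_apply_of_mem_right h.symm hap,
      add_zero, zero_add]

end Submodule

/-- Let `M = M₁ ⊕ M₂` be a duo module. Then `M` is principally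
Goldie*-lifting iff `M₁` and `M₂` are principally Goldie*-lifting. -/
theorem stmt_7 {R M : Type*} [Ring R] [AddCommGroup M] [Module R M]
    (M₁ M₂ : Submodule R M) (hcompl : IsCompl M₁ M₂)
    (hduo : ∀ (f : M →ₗ[R] M) (N : Submodule R M), N.map f ≤ N) :
    PrinGStarLifting R M ↔ PrinGStarLifting R M₁ ∧ PrinGStarLifting R M₂ := by
  have hinv (N : Submodule R M) : N.IsFullyInvariant := fun f =>
    Submodule.map_le_iff_le_comap.mp (hduo f N)
  rw [prinGStarLifting_iff_isBetaStarLifting, prinGStarLifting_iff_isBetaStarLifting_Iic,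
    prinGStarLifting_iff_isBetaStarLifting_Iic]
  have hsplit (N : Submodule R M) : N ⊓ M₁ ⊔ N ⊓ M₂ = N := (hinv N).inf_sup_inf hcompl
  exact ((hcompl.orderIsoIicProdIic hsplit).isBetaStarLifting_congr
    (isCyclicSub_iff_inf hinv hcompl)).trans
      (Prod.isBetaStarLifting_iff isCyclicSub_bot isCyclicSub_bot)
end

section
/- Let M be a module over a ring R such that every cyclic submodule X of M has a supplement D' that is a direct summand, say M = D ⊕ D' with M = X + D' and X ∩ D' small in D', where moreover D is D'-projective (for every surjective R-linear map g : D' → T and every R-linear map f : D → T there exists an R-linear map h : D → D' with g ∘ h = f). Then M is principally Goldie*-lifting. -/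
namespace Submodule

variable {R M : Type*} [Ring R] [AddCommGroup M] [Module R M]

lemma isSmallSub_bot : IsSmallSub (⊥ : Submodule R M) := by
  intro N hN
  rwa [bot_sup_eq] at hN

lemma isSmallSub_map_mkQ {X Y : Submodule R M}
    (hX : ∀ L : Submodule R M, Y ≤ L → X ⊔ L = ⊤ → L = ⊤) : IsSmallSub (X.map Y.mkQ) := by
  intro N hN
  set L := N.comap Y.mkQ
  have hNL : L.map Y.mkQ = N := map_comap_eq_of_surjective Y.mkQ_surjective N
  have hYL : Y ≤ L := by
    simpa only [ker_mkQ] using LinearMap.ker_le_comap (f := Y.mkQ) (p := N)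
  have hXL : X ⊔ L = ⊤ := by
    have : Y ⊔ (X ⊔ L) = ⊤ := by rw [← map_mkQ_eq_top, map_sup, hNL, hN]
    rwa [← sup_assoc, sup_comm Y, sup_assoc, sup_eq_right.mpr hYL] at this
  rw [← hNL, hX L hYL hXL, map_top, range_mkQ]

lemma betaStar_of_le {X Y : Submodule R M} (hYX : Y ≤ X)
    (hX : ∀ L : Submodule R M, Y ≤ L → X ⊔ L = ⊤ → L = ⊤) : BetaStar X Y := by
  rw [BetaStar, sup_eq_left.mpr hYX, mkQ_map_self]
  exact ⟨isSmallSub_bot, isSmallSub_map_mkQ hX⟩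

lemma betaStar_of_isCompl_of_le {X Y D' : Submodule R M} (hYD' : IsCompl Y D') (hYX : Y ≤ X)
    (hsmall : IsSmallIn (X ⊓ D') D') : BetaStar X Y := by
  refine betaStar_of_le hYX fun L hYL hXL => ?_
  have hX : X = Y ⊔ X ⊓ D' := by
    rw [inf_comm, ← sup_inf_assoc_of_le D' hYX, hYD'.sup_eq_top, top_inf_eq]
  have hXD'L : X ⊓ D' ⊔ L = ⊤ := by
    rwa [hX, sup_assoc, sup_eq_right.mpr (le_sup_of_le_right hYL)] at hXL
  have hLD' : L ⊓ D' = D' := by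
    refine hsmall _ inf_le_right ?_
    rw [← sup_inf_assoc_of_le L inf_le_right, hXD'L, top_inf_eq]
  rw [eq_top_iff, ← hYD'.sup_eq_top]
  exact sup_le hYL (hLD' ▸ inf_le_left)

lemma isCompl_range_subtype_sub {D D' : Submodule R M} (hDD' : IsCompl D D') (k : D →ₗ[R] D') :
    IsCompl (LinearMap.range (D.subtype - D'.subtype ∘ₗ k)) D' := by
  constructor
  · rw [disjoint_def]
    rintro _ ⟨d, rfl⟩ hd
    have hdD' : (d : M) ∈ D' := by
      simpa using D'.add_mem hd (k d).2
    have : d = 0 := Subtype.ext (disjoint_def.mp hDD'.disjoint _ d.2 hdD')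
    simp [this]
  · rw [codisjoint_iff, eq_top_iff]
    intro m _
    obtain ⟨d, hd, d', hd', rfl⟩ := mem_sup.mp (hDD'.sup_eq_top ▸ mem_top : m ∈ D ⊔ D')
    refine mem_sup.mpr ⟨_, ⟨⟨d, hd⟩, rfl⟩, k ⟨d, hd⟩ + d', D'.add_mem (k _).2 hd', ?_⟩
    show (d : M) - k ⟨d, hd⟩ + (k ⟨d, hd⟩ + d') = d + d'
    abel

lemma mkQ_comp_subtype_surjective {X D' : Submodule R M} (hXD' : X ⊔ D' = ⊤) :
    Function.Surjective (X.mkQ ∘ₗ D'.subtype) := by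
  rw [← LinearMap.range_eq_top, LinearMap.range_comp, range_subtype, map_mkQ_eq_top, hXD']

lemma range_subtype_sub_le {X D D' : Submodule R M} {k : D →ₗ[R] D'}
    (hk : X.mkQ ∘ₗ D'.subtype ∘ₗ k = X.mkQ ∘ₗ D.subtype) :
    LinearMap.range (D.subtype - D'.subtype ∘ₗ k) ≤ X := by
  rintro _ ⟨d, rfl⟩
  rw [← X.ker_mkQ, LinearMap.mem_ker, LinearMap.sub_apply, map_sub]
  exact sub_eq_zero.mpr (LinearMap.congr_fun hk d).symm

end Submodule

/-- If every cyclic submodule of `M` has a supplement `D'` that is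
a direct summand (`M = D ⊕ D'`) with `D` being `D'`-projective, then `M` is
principally Goldie*-lifting. -/
theorem stmt_8 {R : Type*} {M : Type v} [Ring R] [AddCommGroup M] [Module R M]
    (h : ∀ X : Submodule R M, IsCyclicSub X →
      ∃ D D' : Submodule R M, IsCompl D D' ∧ X ⊔ D' = ⊤ ∧ IsSmallIn (X ⊓ D') D' ∧
        ∀ (T : Type v) [AddCommGroup T] [Module R T] (g : D' →ₗ[R] T)
          (f : D →ₗ[R] T), Function.Surjective g →
            ∃ k : D →ₗ[R] D', g ∘ₗ k = f) :
    PrinGStarLifting R M := by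
  intro X hX
  obtain ⟨D, D', hDD', hXD', hsmall, hproj⟩ := h X hX
  obtain ⟨k, hk⟩ := hproj (M ⧸ X) (X.mkQ ∘ₗ D'.subtype) (X.mkQ ∘ₗ D.subtype)
    (Submodule.mkQ_comp_subtype_surjective hXD')
  have hY := Submodule.isCompl_range_subtype_sub hDD' k
  exact ⟨_, ⟨D', hY⟩,
    Submodule.betaStar_of_isCompl_of_le hY (Submodule.range_subtype_sub_le hk) hsmall⟩
end

section
/- Let M be a principally Goldie*-lifting module over a ring R that is distributive (for all submodules A, B, C of M, A ∩ (B + C) = (A ∩ B) + (A ∩ C)). Then every quotient module M/N of M is principally Goldie*-lifting. -/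
theorem Disjoint.sup_inf_sup_eq {α : Type*} [Lattice α] [OrderBot α]
    (hdist : ∀ a b c : α, a ⊓ (b ⊔ c) = a ⊓ b ⊔ a ⊓ c) {a b : α} (h : Disjoint a b) (c : α) :
    (a ⊔ c) ⊓ (b ⊔ c) = c := by
  let _ : DistribLattice α := DistribLattice.ofInfSupLe fun a b c => (hdist a b c).le
  rw [← sup_inf_right, h.eq_bot, bot_sup_eq]

section

variable {R M M' : Type*} [Ring R] [AddCommGroup M] [Module R M] [AddCommGroup M'] [Module R M']
  {f : M →ₗ[R] M'}

theorem IsSmallSub.map_of_surjective {K : Submodule R M} (hK : IsSmallSub K)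
    (hf : Function.Surjective f) : IsSmallSub (K.map f) := by
  intro L hL
  have hker : LinearMap.ker f ≤ L.comap f := LinearMap.ker_le_comap f
  have hpre : K ⊔ L.comap f = ⊤ :=
    calc K ⊔ L.comap f = ((K ⊔ L.comap f).map f).comap f := by
          rw [Submodule.comap_map_eq, sup_assoc, sup_eq_left.mpr hker]
      _ = ⊤ := by
          rw [Submodule.map_sup, Submodule.map_comap_eq_of_surjective hf, hL, Submodule.comap_top]
  rw [← Submodule.map_comap_eq_of_surjective hf L, hK _ hpre, Submodule.map_top,
    LinearMap.range_eq_top.mpr hf]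

theorem IsSmallSub.map_mkQ_sup_of_surjective {A B : Submodule R M}
    (h : IsSmallSub ((A ⊔ B).map A.mkQ)) (hf : Function.Surjective f) :
    IsSmallSub ((A.map f ⊔ B.map f).map (A.map f).mkQ) := by
  set g := A.mapQ (A.map f) f (Submodule.le_comap_map f A)
  have hg : g ∘ₗ A.mkQ = (A.map f).mkQ ∘ₗ f := Submodule.mapQ_mkQ _ _ _
  have hgsurj : Function.Surjective g := by
    refine Function.Surjective.of_comp (g := A.mkQ) ?_
    rw [← LinearMap.coe_comp, hg, LinearMap.coe_comp]
    exact (A.map f).mkQ_surjective.comp hf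
  have himage : ((A ⊔ B).map A.mkQ).map g = (A.map f ⊔ B.map f).map (A.map f).mkQ := by
    rw [← Submodule.map_comp, hg, Submodule.map_comp, Submodule.map_sup]
  exact himage ▸ h.map_of_surjective hgsurj

theorem BetaStar.map_of_surjective {X Y : Submodule R M} (h : BetaStar X Y)
    (hf : Function.Surjective f) : BetaStar (X.map f) (Y.map f) := by
  refine ⟨h.1.map_mkQ_sup_of_surjective hf, ?_⟩
  rw [sup_comm]
  exact (sup_comm X Y ▸ h.2).map_mkQ_sup_of_surjective hf

theorem IsCompl.map_of_surjective
    (hdist : ∀ A B C : Submodule R M, A ⊓ (B ⊔ C) = (A ⊓ B) ⊔ (A ⊓ C))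
    {D D' : Submodule R M} (h : IsCompl D D') (hf : Function.Surjective f) :
    IsCompl (D.map f) (D'.map f) := by
  constructor
  · rw [disjoint_iff, ← Submodule.map_comap_eq_of_surjective hf (_ ⊓ _), Submodule.comap_inf,
      Submodule.comap_map_eq, Submodule.comap_map_eq, h.disjoint.sup_inf_sup_eq hdist]
    exact eq_bot_iff.mpr (Submodule.map_le_iff_le_comap.mpr (Submodule.comap_bot f).ge)
  · rw [codisjoint_iff, ← Submodule.map_sup, h.sup_eq_top, Submodule.map_top,
      LinearMap.range_eq_top.mpr hf]

theorem PrinGStarLifting.of_surjective (hM : PrinGStarLifting R M)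
    (hdist : ∀ A B C : Submodule R M, A ⊓ (B ⊔ C) = (A ⊓ B) ⊔ (A ⊓ C))
    (hf : Function.Surjective f) : PrinGStarLifting R M' := by
  rintro _ ⟨y, rfl⟩
  obtain ⟨m, rfl⟩ := hf y
  obtain ⟨D, ⟨D', hcompl⟩, hβ⟩ := hM (Submodule.span R {m}) ⟨m, rfl⟩
  refine ⟨D.map f, ⟨D'.map f, hcompl.map_of_surjective hdist hf⟩, ?_⟩
  rw [← Set.image_singleton, ← Submodule.map_span]
  exact hβ.map_of_surjective hf

end

/-- If `M` is principally Goldie*-lifting and distributive, then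
every quotient module of `M` is principally Goldie*-lifting. -/
theorem stmt_10 {R M : Type*} [Ring R] [AddCommGroup M] [Module R M]
    (hM : PrinGStarLifting R M)
    (hdist : ∀ A B C : Submodule R M, A ⊓ (B ⊔ C) = (A ⊓ B) ⊔ (A ⊓ C)) :
    ∀ N : Submodule R M, PrinGStarLifting R (M ⧸ N) :=
  fun N => hM.of_surjective hdist N.mkQ_surjective
end

section
/- Let M be a principally Goldie*-lifting module over a ring R that is distributive (for all submodules A, B, C of M, A ∩ (B + C) = (A ∩ B) + (A ∩ C)). Then M/Rad(M) is principally semisimple, i.e., every cyclic submodule of M/Rad(M) is a direct summand of M/Rad(M). -/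
/-!
Let `X = Rm` and let `D ⊕ D' = M` with `X β* D`. Smallness of `(X+D)/X` in `M/X` gives
`X + D' = M`. Smallness of `(X+D)/D` in `M/D` gives `D + N = M` for every maximal `N` not
containing `X ∩ D'`, and distributivity then forces `D' ≤ N`, which is absurd; hence
`X ∩ D' ≤ Rad M`. Distributivity once more shows that the images of `X` and `D'` in
`M/Rad M` intersect trivially, so they are complements.
-/

section DistribHypothesis

variable {α : Type*} [Lattice α]

theorem sup_inf_sup_le_of_inf_sup_eq (hdist : ∀ a b c : α, a ⊓ (b ⊔ c) = a ⊓ b ⊔ a ⊓ c)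
    (a b c : α) : (a ⊔ b) ⊓ (a ⊔ c) ≤ a ⊔ b ⊓ c := by
  rw [hdist, inf_eq_right.mpr le_sup_left, inf_comm, hdist]
  exact sup_le le_sup_left
    (sup_le (inf_le_right.trans le_sup_left) ((inf_comm c b).le.trans le_sup_right))

theorem le_of_isCompl_of_sup_eq_top [BoundedOrder α]
    (hdist : ∀ a b c : α, a ⊓ (b ⊔ c) = a ⊓ b ⊔ a ⊓ c) {d d' n : α} (hc : IsCompl d d')
    (h : d ⊔ n = ⊤) : d' ≤ n :=
  calc d' = d' ⊓ (d ⊔ n) := by rw [h, inf_top_eq]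
    _ = d' ⊓ n := by rw [hdist, hc.symm.inf_eq_bot, bot_sup_eq]
    _ ≤ n := inf_le_right

end DistribHypothesis

namespace Submodule

variable {R M : Type*} [Ring R] [AddCommGroup M] [Module R M]

theorem sup_eq_top_of_isSmallSub_map_mkQ_s13 {A K N : Submodule R M}
    (hK : IsSmallSub (K.map A.mkQ)) (h : K ⊔ N = ⊤) : A ⊔ N = ⊤ := by
  have hmap : K.map A.mkQ ⊔ (A ⊔ N).map A.mkQ = ⊤ := by
    rw [← map_sup, sup_left_comm, h, sup_top_eq, map_top, range_mkQ]
  simpa only [comap_map_mkQ, comap_top, ← sup_assoc, sup_idem] using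
    congrArg (comap A.mkQ) (hK _ hmap)

theorem disjoint_map_mkQ_iff {P X Y : Submodule R M} :
    Disjoint (X.map P.mkQ) (Y.map P.mkQ) ↔ (P ⊔ X) ⊓ (P ⊔ Y) ≤ P := by
  rw [disjoint_iff_inf_le, ← comap_le_comap_iff_of_surjective P.mkQ_surjective, comap_inf,
    comap_map_mkQ, comap_map_mkQ, comap_bot, ker_mkQ]

theorem isCompl_map_mkQ {P X Y : Submodule R M} (hsup : X ⊔ Y = ⊤)
    (hinf : (P ⊔ X) ⊓ (P ⊔ Y) ≤ P) : IsCompl (X.map P.mkQ) (Y.map P.mkQ) :=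
  ⟨disjoint_map_mkQ_iff.mpr hinf,
    codisjoint_iff.mpr (by rw [← map_sup, hsup, map_top, range_mkQ])⟩

end Submodule

section BetaStar

open Submodule

variable {R M : Type*} [Ring R] [AddCommGroup M] [Module R M]

theorem BetaStar.sup_eq_top_of_isCompl {X D D' : Submodule R M} (hβ : BetaStar X D)
    (hD : IsCompl D D') : X ⊔ D' = ⊤ :=
  sup_eq_top_of_isSmallSub_map_mkQ_s13 hβ.1 (by rw [sup_assoc, hD.sup_eq_top, sup_top_eq])

theorem BetaStar.inf_le_radSub_of_isCompl
    (hdist : ∀ A B C : Submodule R M, A ⊓ (B ⊔ C) = (A ⊓ B) ⊔ (A ⊓ C))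
    {X D D' : Submodule R M} (hβ : BetaStar X D) (hD : IsCompl D D') :
    X ⊓ D' ≤ RadSub R M := by
  refine le_sInf fun N hN => ?_
  by_contra hle
  have hXN : X ⊔ N = ⊤ :=
    top_le_iff.mp (hN.2 _ (right_lt_sup.mpr hle) ▸ sup_le_sup_right inf_le_left N)
  have hDN : D ⊔ N = ⊤ := sup_eq_top_of_isSmallSub_map_mkQ_s13 (sup_comm X D ▸ hβ.2)
    (by rw [sup_assoc, hXN, sup_top_eq])
  exact hle (inf_le_right.trans (le_of_isCompl_of_sup_eq_top hdist hD hDN))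

theorem BetaStar.isDirectSummand_map_radSub_mkQ
    (hdist : ∀ A B C : Submodule R M, A ⊓ (B ⊔ C) = (A ⊓ B) ⊔ (A ⊓ C))
    {X D : Submodule R M} (hβ : BetaStar X D) (hD : IsDirectSummand D) :
    IsDirectSummand (X.map (RadSub R M).mkQ) := by
  obtain ⟨D', hD'⟩ := hD
  refine ⟨D'.map (RadSub R M).mkQ, isCompl_map_mkQ (hβ.sup_eq_top_of_isCompl hD') ?_⟩
  calc (RadSub R M ⊔ X) ⊓ (RadSub R M ⊔ D') ≤ RadSub R M ⊔ X ⊓ D' :=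
        sup_inf_sup_le_of_inf_sup_eq hdist _ _ _
    _ ≤ RadSub R M := sup_le le_rfl (hβ.inf_le_radSub_of_isCompl hdist hD')

end BetaStar

/-- If `M` is principally Goldie*-lifting and distributive, then
`M/Rad(M)` is principally semisimple. -/
theorem stmt_13 {R M : Type*} [Ring R] [AddCommGroup M] [Module R M]
    (hM : PrinGStarLifting R M)
    (hdist : ∀ A B C : Submodule R M, A ⊓ (B ⊔ C) = (A ⊓ B) ⊔ (A ⊓ C)) :
    ∀ X : Submodule R (M ⧸ RadSub R M), IsCyclicSub X → IsDirectSummand X := by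
  rintro _ ⟨x, rfl⟩
  obtain ⟨m, rfl⟩ := (RadSub R M).mkQ_surjective x
  obtain ⟨D, hD, hβ⟩ := hM (Submodule.span R {m}) ⟨m, rfl⟩
  have hspan : Submodule.span R {(RadSub R M).mkQ m} =
      (Submodule.span R {m}).map (RadSub R M).mkQ := by
    rw [Submodule.map_span, Set.image_singleton]
  exact hspan ▸ hβ.isDirectSummand_map_radSub_mkQ hdist hD
end

section
/- Let M be a principally Goldie*-lifting module over a ring R such that Rad(M) is small in M. Then M/Rad(M) is principally semisimple, i.e., every cyclic submodule of M/Rad(M) is a direct summand of M/Rad(M). -/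
/-!
Lift a cyclic submodule of `M / Rad M` to `X = R m` and pick a summand `D ⊕ D' = M` with
`X β* D`. Smallness of `(X + D)/X` in `M/X` gives `X + D' = M`; smallness of `(X + D)/D` in `M/D`
puts `(X + D)/D` inside `Rad (M/D) = (Rad M + D)/D`, so `X ≤ D + Rad M`. Since the radical is
compatible with the decomposition `M = D ⊕ D'`, `(D + Rad M) ∩ (D' + Rad M) = Rad M`, and hence
the images of `X` and `D'` are complements in `M / Rad M`.
-/

open Submodule Module

section

variable {R M : Type*} [Ring R] [AddCommGroup M] [Module R M]

theorem radSub_eq_jacobson : RadSub R M = jacobson R M := rfl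

theorem IsSmallSub.le_jacobson {K : Submodule R M} (hK : IsSmallSub K) : K ≤ jacobson R M := by
  refine le_sInf fun N hN => ?_
  by_contra hKN
  exact hN.1 (hK N (hN.2 _ (right_lt_sup.2 hKN)))

theorem jacobson_quotient_of_isCompl {D D' : Submodule R M} (h : IsCompl D D') :
    jacobson R (M ⧸ D) = (jacobson R M).map D.mkQ := by
  refine le_antisymm ?_ (map_jacobson_le D.mkQ)
  let s : M ⧸ D →ₗ[R] M := D'.subtype ∘ₗ (D.quotientEquivOfIsCompl D' h).toLinearMap
  have hs : D.mkQ ∘ₗ s = LinearMap.id := LinearMap.ext (mk_quotientEquivOfIsCompl_apply h)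
  calc jacobson R (M ⧸ D) = ((jacobson R (M ⧸ D)).map s).map D.mkQ := by
        rw [← map_comp, hs, map_id]
    _ ≤ (jacobson R M).map D.mkQ := map_mono (map_jacobson_le s)

theorem sup_jacobson_inf_sup_jacobson_le {D D' : Submodule R M} (h : IsCompl D D') :
    (D ⊔ jacobson R M) ⊓ (D' ⊔ jacobson R M) ≤ jacobson R M := by
  set J := jacobson R M
  let p : M →ₗ[R] M := D.projection D' h
  have hpJ : ∀ {r}, r ∈ J → p r ∈ J := fun hr => map_jacobson_le p (mem_map_of_mem hr)
  rintro z ⟨hzD, hzD'⟩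
  obtain ⟨d, hd, r, hr, rfl⟩ := mem_sup.1 hzD
  obtain ⟨b, hb, r', hr', hbr⟩ := mem_sup.1 hzD'
  -- Projecting `d + r = b + r'` onto `D` along `D'` gives `d = p r' - p r ∈ J`.
  have hproj : d + p r = p r' := by
    have := congrArg p hbr
    rwa [map_add, map_add, projection_apply_of_mem_right h hb, zero_add,
      projection_apply_of_mem_left h hd, eq_comm] at this
  have hdJ : d ∈ J := by
    rw [← add_sub_cancel_right d (p r), hproj]
    exact J.sub_mem (hpJ hr') (hpJ hr)
  exact J.add_mem hdJ hr

theorem BetaStar.le_sup_jacobson {X D D' : Submodule R M} (hβ : BetaStar X D)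
    (h : IsCompl D D') : X ≤ D ⊔ jacobson R M := by
  have hmap : (X ⊔ D).map D.mkQ ≤ (jacobson R M).map D.mkQ :=
    hβ.2.le_jacobson.trans (jacobson_quotient_of_isCompl h).le
  rw [← comap_map_mkQ]
  exact le_sup_left.trans (map_le_iff_le_comap.1 hmap)

theorem BetaStar.sup_eq_top {X D D' : Submodule R M} (hβ : BetaStar X D)
    (h : Codisjoint D D') : X ⊔ D' = ⊤ := by
  have htop : (X ⊔ D).map X.mkQ ⊔ D'.map X.mkQ = ⊤ := by
    rw [← Submodule.map_sup, sup_assoc, h.eq_top, sup_top_eq, Submodule.map_top, range_mkQ]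
  simpa only [comap_map_mkQ, comap_top] using congrArg (comap X.mkQ) (hβ.1 _ htop)

theorem isCompl_map_mkQ {J X Y : Submodule R M} (hsup : X ⊔ Y = ⊤)
    (hinf : (X ⊔ J) ⊓ (Y ⊔ J) ≤ J) : IsCompl (X.map J.mkQ) (Y.map J.mkQ) := by
  refine ⟨disjoint_iff_inf_le.2 ?_, codisjoint_iff.2 ?_⟩
  · rw [← comap_le_comap_iff_of_surjective J.mkQ_surjective, comap_inf, comap_map_mkQ,
      comap_map_mkQ, comap_bot, ker_mkQ, sup_comm J, sup_comm J]
    exact hinf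
  · rw [← Submodule.map_sup, hsup, Submodule.map_top, range_mkQ]

end

theorem stmt_14_general {R M : Type*} [Ring R] [AddCommGroup M] [Module R M]
    (hM : PrinGStarLifting R M) :
    ∀ X : Submodule R (M ⧸ RadSub R M), IsCyclicSub X → IsDirectSummand X := by
  rw [radSub_eq_jacobson]
  rintro X ⟨x, rfl⟩
  obtain ⟨m, rfl⟩ := (jacobson R M).mkQ_surjective x
  obtain ⟨D, ⟨D', hDD'⟩, hβ⟩ := hM (span R {m}) ⟨m, rfl⟩
  have hinf : (span R {m} ⊔ jacobson R M) ⊓ (D' ⊔ jacobson R M) ≤ jacobson R M :=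
    (inf_le_inf_right _ (sup_le (hβ.le_sup_jacobson hDD') le_sup_right)).trans
      (sup_jacobson_inf_sup_jacobson_le hDD')
  refine ⟨D'.map (jacobson R M).mkQ, ?_⟩
  rw [← Set.image_singleton, ← map_span]
  exact isCompl_map_mkQ (hβ.sup_eq_top hDD'.codisjoint) hinf

/-- If `M` is principally Goldie*-lifting and `Rad(M)` is small
in `M`, then `M/Rad(M)` is principally semisimple. -/
theorem stmt_14 {R M : Type*} [Ring R] [AddCommGroup M] [Module R M]
    (hM : PrinGStarLifting R M) (hrad : IsSmallSub (RadSub R M)) :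
    ∀ X : Submodule R (M ⧸ RadSub R M), IsCyclicSub X → IsDirectSummand X :=
  stmt_14_general hM
end

section
/- Let M be a π-projective module over a ring R (for all submodules U, V of M with U + V = M there exists an R-linear endomorphism f of M with f(M) ⊆ U and (id − f)(M) ⊆ V). Then M is principally Goldie*-lifting if and only if every cyclic submodule X of M can be written as X = D ⊕ A where D is a direct summand of M and A is small in M. -/
def IsPiProjective (R M : Type*) [Ring R] [AddCommGroup M] [Module R M] : Prop :=
  ∀ U V : Submodule R M, U ⊔ V = ⊤ →
    ∃ f : M →ₗ[R] M, LinearMap.range f ≤ U ∧ LinearMap.range (LinearMap.id - f) ≤ V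

section SmallSubmodules

variable {R M N : Type*} [Ring R] [AddCommGroup M] [Module R M] [AddCommGroup N] [Module R N]

theorem IsSmallIn.isSmallSub {K L : Submodule R M} (h : IsSmallIn K L) (hK : K ≤ L) :
    IsSmallSub K := by
  intro P hP
  have hL : K ⊔ P ⊓ L = L := by rw [← sup_inf_assoc_of_le P hK, hP, top_inf_eq]
  have hLP : L ≤ P := h _ inf_le_right hL ▸ inf_le_left
  rw [← hP, eq_comm, sup_eq_right]
  exact hK.trans hLP

theorem IsSmallSub.eq_top_of_map_mkQ {X K L : Submodule R M} (h : IsSmallSub (K.map X.mkQ))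
    (hXL : X ≤ L) (hKL : K ⊔ L = ⊤) : L = ⊤ := by
  have hmap : L.map X.mkQ = ⊤ :=
    h _ (by rw [← Submodule.map_sup, hKL, Submodule.map_top, Submodule.range_mkQ])
  rw [← sup_eq_right.2 hXL, ← Submodule.comap_map_mkQ, hmap, Submodule.comap_top]

end SmallSubmodules

section BetaStar

variable {R M : Type*} [Ring R] [AddCommGroup M] [Module R M] {X D D' A : Submodule R M}

theorem BetaStar.sup_eq_top_of_isCompl_s17 (hXD : BetaStar X D) (h : IsCompl D D') : X ⊔ D' = ⊤ :=
  hXD.1.eq_top_of_map_mkQ le_sup_left <| by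
    rw [eq_top_iff, ← h.sup_eq_top]
    exact sup_le (le_sup_right.trans le_sup_left) (le_sup_right.trans le_sup_right)

theorem BetaStar.isSmallSub_inf_of_isCompl (hXD : BetaStar X D) (h : IsCompl D D') :
    IsSmallSub (X ⊓ D') := by
  refine IsSmallIn.isSmallSub (fun L hL hAL => ?_) inf_le_right
  have hDL : D ⊔ L = ⊤ := hXD.2.eq_top_of_map_mkQ le_sup_left <| by
    rw [eq_top_iff, ← h.sup_eq_top, ← hAL]
    exact sup_le (le_sup_right.trans le_sup_left)
      (sup_le (inf_le_left.trans (le_sup_left.trans le_sup_left))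
        (le_sup_right.trans le_sup_right))
  calc L = (D ⊔ L) ⊓ D' := by
        rw [sup_comm D L, sup_inf_assoc_of_le D hL, h.inf_eq_bot, sup_bot_eq]
    _ = D' := by rw [hDL, top_inf_eq]

theorem betaStar_of_sup_eq (hA : IsSmallSub A) (h : D ⊔ A = X) : BetaStar X D := by
  have hDX : D ≤ X := h ▸ le_sup_left
  rw [BetaStar, sup_eq_left.2 hDX, Submodule.mkQ_map_self, ← h, Submodule.map_sup,
    Submodule.mkQ_map_self, bot_sup_eq]
  exact ⟨fun _ hN => by simpa using hN, hA.map _⟩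

end BetaStar

section PiProjective

variable {R M : Type*} [Ring R] [AddCommGroup M] [Module R M]

theorem IsCompl.map_of_range_id_sub_le {D D' : Submodule R M} (h : IsCompl D D')
    {f : M →ₗ[R] M} (hf : LinearMap.range (LinearMap.id - f) ≤ D') : IsCompl (D.map f) D' := by
  have hsub : ∀ m, m - f m ∈ D' := fun m => hf ⟨m, rfl⟩
  constructor
  · rw [Submodule.disjoint_def]
    rintro _ ⟨d, hd, rfl⟩ hfd
    have hdD' : d ∈ D' := by simpa using D'.add_mem (hsub d) hfd
    simp [Submodule.disjoint_def.1 h.disjoint d hd hdD']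
  · rw [codisjoint_iff, eq_top_iff, ← h.sup_eq_top]
    refine sup_le (fun d hd => ?_) le_sup_right
    simpa using Submodule.add_mem_sup (Submodule.mem_map_of_mem (f := f) hd) (hsub d)

theorem IsPiProjective.exists_sup_eq_of_betaStar (hM : IsPiProjective R M)
    {X D : Submodule R M} (hD : IsDirectSummand D) (hXD : BetaStar X D) :
    ∃ D₀ A : Submodule R M, IsDirectSummand D₀ ∧ IsSmallSub A ∧ D₀ ⊓ A = ⊥ ∧ D₀ ⊔ A = X := by
  obtain ⟨D', hDD'⟩ := hD
  obtain ⟨f, hfX, hfD'⟩ := hM X D' (hXD.sup_eq_top_of_isCompl_s17 hDD')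
  have hD₀ : IsCompl (D.map f) D' := hDD'.map_of_range_id_sub_le hfD'
  have hD₀X : D.map f ≤ X := LinearMap.map_le_range.trans hfX
  refine ⟨D.map f, X ⊓ D', ⟨D', hD₀⟩, hXD.isSmallSub_inf_of_isCompl hDD', ?_, ?_⟩
  · exact disjoint_iff.1 (hD₀.disjoint.mono_right inf_le_right)
  · rw [inf_comm, ← sup_inf_assoc_of_le D' hD₀X, hD₀.sup_eq_top, top_inf_eq]

end PiProjective

/-- A π-projective module `M` is principally Goldie*-lifting iff
every cyclic submodule `X` of `M` decomposes as `X = D ⊕ A` with `D` a direct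
summand of `M` and `A` small in `M`. -/
theorem stmt_17 {R M : Type*} [Ring R] [AddCommGroup M] [Module R M]
    (hpi : ∀ U V : Submodule R M, U ⊔ V = ⊤ →
      ∃ f : M →ₗ[R] M, LinearMap.range f ≤ U ∧
        LinearMap.range (LinearMap.id - f) ≤ V) :
    PrinGStarLifting R M ↔
      ∀ X : Submodule R M, IsCyclicSub X →
        ∃ D A : Submodule R M, IsDirectSummand D ∧ IsSmallSub A ∧
          D ⊓ A = ⊥ ∧ D ⊔ A = X :=
  forall₂_congr fun _ _ =>
    ⟨fun ⟨_, hD, hXD⟩ => IsPiProjective.exists_sup_eq_of_betaStar hpi hD hXD,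
      fun ⟨D, _, hD, hA, _, hDA⟩ => ⟨D, hD, betaStar_of_sup_eq hA hDA⟩⟩
end

section
/- Let M be a Noetherian module over a ring R with the summand sum property (the sum of any two direct summands of M is again a direct summand of M). Then M is principally Goldie*-lifting if and only if M is Goldie*-lifting. -/
/-!
By the Noetherian hypothesis every submodule is a finite sum of cyclic submodules, and by the
summand sum property a finite sum of direct summands is a direct summand. So it suffices that β*
equivalence is compatible with sums: `X β* Y` and `X' β* Y'` imply `(X + X') β* (Y + Y')`.
This becomes transparent once smallness in `M/X` is read through the correspondence between
submodules of `M/X` and submodules of `M` containing `X`.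
-/

namespace Submodule

variable {R M : Type*} [Ring R] [AddCommGroup M] [Module R M]

theorem isSmallSub_map_mkQ_iff (X K : Submodule R M) :
    IsSmallSub (K.map X.mkQ) ↔ ∀ N : Submodule R M, X ≤ N → K ⊔ N = ⊤ → N = ⊤ := by
  constructor
  · intro hK N hXN hKN
    have hN : N.map X.mkQ = ⊤ := hK _ (by rw [← map_sup, hKN, map_top, range_mkQ])
    rwa [map_mkQ_eq_top, sup_eq_right.mpr hXN] at hN
  · intro hK N' hKN'
    have hmap : (N'.comap X.mkQ).map X.mkQ = N' := map_comap_eq_of_surjective X.mkQ_surjective N'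
    have hXN : X ≤ N'.comap X.mkQ := X.le_comap_mkQ N'
    have hsup : K ⊔ N'.comap X.mkQ = ⊤ := by
      have h : (K ⊔ N'.comap X.mkQ).map X.mkQ = ⊤ := by rw [map_sup, hmap, hKN']
      rwa [map_mkQ_eq_top, sup_left_comm, sup_eq_right.mpr hXN] at h
    rw [← hmap, hK _ hXN hsup, map_top, range_mkQ]

theorem betaStar_iff (X Y : Submodule R M) :
    BetaStar X Y ↔ (∀ N : Submodule R M, X ≤ N → Y ⊔ N = ⊤ → N = ⊤) ∧
      (∀ N : Submodule R M, Y ≤ N → X ⊔ N = ⊤ → N = ⊤) := by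
  have absorb : ∀ {A B N : Submodule R M}, A ≤ N → A ⊔ B ⊔ N = B ⊔ N := fun {A B _} hAN => by
    rw [sup_comm A B, sup_assoc, sup_eq_right.mpr hAN]
  rw [BetaStar, isSmallSub_map_mkQ_iff, isSmallSub_map_mkQ_iff]
  refine and_congr (forall_congr' fun N => ?_) (forall_congr' fun N => ?_) <;>
    refine imp_congr_right fun hN => ?_
  · rw [absorb hN]
  · rw [sup_comm X Y, absorb hN]

theorem eq_top_of_le_of_sup_sup_eq_top {X X' Y Y' : Submodule R M}
    (h : ∀ N : Submodule R M, X ≤ N → Y ⊔ N = ⊤ → N = ⊤)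
    (h' : ∀ N : Submodule R M, X' ≤ N → Y' ⊔ N = ⊤ → N = ⊤)
    (N : Submodule R M) (hN : X ⊔ X' ≤ N) (hYN : Y ⊔ Y' ⊔ N = ⊤) : N = ⊤ := by
  have hYN' : Y ⊔ N = ⊤ :=
    h' (Y ⊔ N) (le_sup_of_le_right (le_sup_right.trans hN)) (by rw [← hYN]; ac_rfl)
  exact h N (le_sup_left.trans hN) hYN'

theorem betaStar_sup {X X' Y Y' : Submodule R M}
    (h : BetaStar X Y) (h' : BetaStar X' Y') : BetaStar (X ⊔ X') (Y ⊔ Y') := by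
  rw [betaStar_iff] at *
  exact ⟨eq_top_of_le_of_sup_sup_eq_top h.1 h'.1, eq_top_of_le_of_sup_sup_eq_top h.2 h'.2⟩

end Submodule

/-- A Noetherian module with the summand sum property is
principally Goldie*-lifting iff it is Goldie*-lifting. -/
theorem stmt_18 {R M : Type*} [Ring R] [AddCommGroup M] [Module R M]
    [IsNoetherian R M]
    (hssp : ∀ D₁ D₂ : Submodule R M, IsDirectSummand D₁ → IsDirectSummand D₂ →
      IsDirectSummand (D₁ ⊔ D₂)) :
    PrinGStarLifting R M ↔
      ∀ N : Submodule R M, ∃ D : Submodule R M, IsDirectSummand D ∧ BetaStar N D := by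
  refine ⟨fun hcyclic N => ?_, fun h X _ => h X⟩
  refine Submodule.fg_induction
    (motive := fun N _ => ∃ D : Submodule R M, IsDirectSummand D ∧ BetaStar N D)
    (fun x => hcyclic _ ⟨x, rfl⟩) ?_ N (IsNoetherian.noetherian N)
  rintro N₁ N₂ - - ⟨D₁, hD₁, hN₁⟩ ⟨D₂, hD₂, hN₂⟩
  exact ⟨D₁ ⊔ D₂, hssp _ _ hD₁ hD₂, Submodule.betaStar_sup hN₁ hN₂⟩
end
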